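/- Binary comparison principle: let u, v: T_m → ℝ be bounded with u(x) ≥ min over distinct successors y,z of (u(y)+u(z))/2 and v(x) ≤ min over distinct successors y,z of (v(y)+v(z))/2 at every vertex x. If along every branch π, limsup v ≤ liminf u, then u ≥ v on T_m. -/

import Mathlib

open Filter Finset

/-- Vertices of the regular `m`-branching tree: finite sequences in `Fin m`
(root-first; the root is `[]`, successors of `x` are `x ++ [i]`). -/
abbrev V (m : ℕ) := List (Fin m)

variable {m : ℕ}

/-- Distance from the root to `x`: sum of edge lengths `1/m^k`. -/
noncomputable def hgt (x : V m) : ℝ :=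
  ∑ k ∈ Finset.range x.length, (1 : ℝ) / (m : ℝ) ^ (k + 1)

/-- Longest common prefix (the common ancestor of two vertices). -/
def lcp : V m → V m → V m
  | a :: x, b :: y => if a = b then a :: lcp x y else []
  | _, _ => []

/-- Path distance on the tree. -/
noncomputable def treeDist (x y : V m) : ℝ := hgt x + hgt y - 2 * hgt (lcp x y)

/-- `z` lies on the minimal path `[x,y]`. -/
def OnPath (z x y : V m) : Prop := lcp x y <+: z ∧ (z <+: x ∨ z <+: y)

/-- Path-distance convexity on the tree. -/
def ConvexT (u : V m → ℝ) : Prop :=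
  ∀ x y z : V m, x ≠ y → OnPath z x y →
    u z ≤ treeDist y z / treeDist x y * u x + treeDist x z / treeDist x y * u y

/-- The local characterization of convexity. -/
def LocConvex (u : V m → ℝ) : Prop :=
  ∀ x : V m,
    (∀ i j : Fin m, i ≠ j → u x ≤ (u (x ++ [i]) + u (x ++ [j])) / 2) ∧
    (x ≠ [] → ∀ i : Fin m,
      u x ≤ (u x.dropLast + (m : ℝ) * u (x ++ [i])) / ((m : ℝ) + 1))

/-- Minimum over pairs of distinct successors of the averages. -/
noncomputable def binMin (u : V m → ℝ) (x : V m) : ℝ :=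
  sInf {r | ∃ i j : Fin m, i ≠ j ∧ r = (u (x ++ [i]) + u (x ++ [j])) / 2}

/-- The operator governing the convex envelope (predecessor term omitted at the root). -/
noncomputable def opMin (u : V m → ℝ) (x : V m) : ℝ :=
  if x = [] then binMin u x
  else min (binMin u x)
    (sInf {r | ∃ i : Fin m,
      r = (u x.dropLast + (m : ℝ) * u (x ++ [i])) / ((m : ℝ) + 1)})

/-- The `k`-th vertex along a branch `π`. -/
def bvert (π : ℕ → Fin m) (k : ℕ) : V m := List.ofFn (fun i : Fin k => π i)

/-- The boundary point in `[0,1]` associated to a branch. -/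
noncomputable def psiB (m : ℕ) (π : ℕ → Fin m) : ℝ :=
  ∑' k : ℕ, (π k : ℝ) / (m : ℝ) ^ (k + 1)

/-- The point of `[0,1]` associated to a vertex. -/
noncomputable def psiV (x : V m) : ℝ :=
  ∑ k : Fin x.length, (x.get k : ℝ) / (m : ℝ) ^ ((k : ℕ) + 1)

/-- The successors of `y` that belong to `B`. -/
def succIn (B : Finset (V m)) (y : V m) : Finset (V m) :=
  B.filter (fun z => ∃ i : Fin m, z = y ++ [i])

/-- A finite binary subtree rooted at `x`. -/
def IsBinSub (x : V m) (B : Finset (V m)) : Prop :=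
  x ∈ B ∧ (succIn B x).card = 2 ∧
    ∀ y ∈ B, y ≠ x →
      x.length < y.length ∧ ((succIn B y).card = 0 ∨ (succIn B y).card = 2)

/-- The endpoints of `B`. -/
def Endpts (B : Finset (V m)) : Finset (V m) :=
  B.filter (fun y => (succIn B y).card = 0)

/-- Binary convexity. -/
def BinConvex (u : V m → ℝ) : Prop :=
  ∀ (x : V m) (B : Finset (V m)), IsBinSub x B →
    u x ≤ ∑ y ∈ Endpts B, (1 : ℝ) / 2 ^ (y.length - x.length) * u y

/-- The local characterization of binary convexity. -/
def LocBinConvex (u : V m → ℝ) : Prop :=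
  ∀ (x : V m) (i j : Fin m), i ≠ j → u x ≤ (u (x ++ [i]) + u (x ++ [j])) / 2

/-- Convex envelope of a boundary datum `g` (path-convexity version). -/
noncomputable def uStar (m : ℕ) (g : ℝ → ℝ) (x : V m) : ℝ :=
  sSup {r | ∃ u : V m → ℝ, ConvexT u ∧
    (∀ π : ℕ → Fin m,
      Filter.limsup (fun k => u (bvert π k)) Filter.atTop ≤ g (psiB m π)) ∧
    r = u x}

/-- Convex envelope of a boundary datum `g` (local characterization version). -/
noncomputable def uStarL (m : ℕ) (g : ℝ → ℝ) (x : V m) : ℝ :=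
  sSup {r | ∃ u : V m → ℝ, LocConvex u ∧
    (∀ π : ℕ → Fin m,
      Filter.limsup (fun k => u (bvert π k)) Filter.atTop ≤ g (psiB m π)) ∧
    r = u x}

/-- Convex envelope of an obstacle `f` defined on the tree. -/
noncomputable def envF (f : V m → ℝ) (x : V m) : ℝ :=
  sSup {r | ∃ u : V m → ℝ, LocConvex u ∧ (∀ z, u z ≤ f z) ∧ r = u x}

/-- Binary convex envelope of a boundary datum `g`. -/
noncomputable def bEnv (m : ℕ) (g : ℝ → ℝ) (x : V m) : ℝ :=
  sSup {r | ∃ u : V m → ℝ, LocBinConvex u ∧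
    (∀ π : ℕ → Fin m,
      Filter.limsup (fun k => u (bvert π k)) Filter.atTop ≤ g (psiB m π)) ∧
    r = u x}

lemma binSet_finite (u : V m → ℝ) (x : V m) :
    {r | ∃ i j : Fin m, i ≠ j ∧ r = (u (x ++ [i]) + u (x ++ [j])) / 2}.Finite := by
  apply Set.Finite.subset
    (Set.finite_range (fun p : Fin m × Fin m => (u (x ++ [p.1]) + u (x ++ [p.2])) / 2))
  rintro r ⟨i, j, _, rfl⟩
  exact ⟨(i, j), rfl⟩

lemma binMin_le (u : V m → ℝ) (x : V m) {i j : Fin m} (hij : i ≠ j) :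
    binMin u x ≤ (u (x ++ [i]) + u (x ++ [j])) / 2 :=
  csInf_le (binSet_finite u x).bddBelow ⟨i, j, hij, rfl⟩

lemma binMin_mem (hm : 2 ≤ m) (u : V m → ℝ) (x : V m) :
    ∃ i j : Fin m, i ≠ j ∧ binMin u x = (u (x ++ [i]) + u (x ++ [j])) / 2 := by
  have hne : {r | ∃ i j : Fin m, i ≠ j ∧ r = (u (x ++ [i]) + u (x ++ [j])) / 2}.Nonempty := by
    refine ⟨_, ⟨⟨0, by omega⟩, ⟨1, by omega⟩, ?_, rfl⟩⟩
    intro h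
    have := congrArg Fin.val h
    simp at this
  exact hne.csInf_mem (binSet_finite u x)

lemma bvert_succ (π : ℕ → Fin m) (k : ℕ) :
    bvert π (k + 1) = bvert π k ++ [π k] := by
  rw [bvert, List.ofFn_succ']
  simp [bvert, List.concat_eq_append, Fin.last]

/-- comparison principle for the binary convexity operator. -/
theorem stmt16 (m : ℕ) (hm : 2 ≤ m) (u v : V m → ℝ)
    (hub : ∃ C : ℝ, ∀ x : V m, |u x| ≤ C)
    (hvb : ∃ C : ℝ, ∀ x : V m, |v x| ≤ C)
    (hu : ∀ x : V m, binMin u x ≤ u x)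
    (hv : ∀ x : V m, v x ≤ binMin v x)
    (hbd : ∀ π : ℕ → Fin m,
      Filter.limsup (fun k => v (bvert π k)) Filter.atTop ≤
        Filter.liminf (fun k => u (bvert π k)) Filter.atTop) :
    ∀ x : V m, v x ≤ u x := by
  by_contra h
  push_neg at h
  obtain ⟨x0, hx0⟩ := h
  set w : V m → ℝ := fun y => v y - u y with hw
  have hδ : 0 < w x0 := by simp [hw]; linarith
  -- step: some successor does not decrease w
  have step : ∀ y : V m, ∃ i : Fin m, w y ≤ w (y ++ [i]) := by
    intro y
    obtain ⟨i, j, hij, heq⟩ := binMin_mem hm u y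
    have h1 : (u (y ++ [i]) + u (y ++ [j])) / 2 ≤ u y := heq ▸ hu y
    have h2 : v y ≤ (v (y ++ [i]) + v (y ++ [j])) / 2 :=
      (hv y).trans (binMin_le v y hij)
    rcases le_total (w (y ++ [i])) (w (y ++ [j])) with hc | hc
    · exact ⟨j, by simp only [hw] at *; linarith⟩
    · exact ⟨i, by simp only [hw] at *; linarith⟩
  choose F hF using step
  -- the greedy vertex sequence
  let X : ℕ → V m := fun n => Nat.rec x0 (fun _ y => y ++ [F y]) n
  have hX0 : X 0 = x0 := rfl
  have hXs : ∀ n, X (n + 1) = X n ++ [F (X n)] := fun n => rfl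
  have hwX : ∀ n, w x0 ≤ w (X n) := by
    intro n
    induction n with
    | zero => exact le_refl _
    | succ n ih => exact ih.trans (hF (X n))
  set L := x0.length with hL
  let π : ℕ → Fin m := fun k => if h : k < L then x0.get ⟨k, h⟩ else F (X (k - L))
  have hbase : bvert π L = x0 := by
    apply List.ext_get
    · simp [bvert, hL]
    · intro n h1 h2
      have hn : n < L := by simpa [bvert] using h1
      simp [bvert, π, dif_pos hn]
  have hkey : ∀ n, bvert π (L + n) = X n := by
    intro n
    induction n with
    | zero => simpa [hX0] using hbase
    | succ n ih =>
      have : bvert π (L + (n + 1)) = bvert π (L + n) ++ [π (L + n)] := bvert_succ π (L + n)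
      rw [this, ih, hXs]
      congr 1
      simp [π]
  have hev : ∀ᶠ k in atTop, u (bvert π k) + w x0 ≤ v (bvert π k) := by
    filter_upwards [eventually_ge_atTop L] with k hk
    obtain ⟨n, rfl⟩ := Nat.exists_eq_add_of_le hk
    have := (hwX n)
    rw [hkey n] at *
    simp only [hw] at this ⊢
    linarith [hwX n, (hkey n ▸ (hwX n) : w x0 ≤ w (bvert π (L + n)))]
  obtain ⟨Cu, hCu⟩ := hub
  obtain ⟨Cv, hCv⟩ := hvb
  have hub1 : IsBoundedUnder (· ≤ ·) atTop (fun k => u (bvert π k)) :=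
    isBoundedUnder_of ⟨Cu, fun k => (abs_le.1 (hCu _)).2⟩
  have hub2 : IsBoundedUnder (· ≥ ·) atTop (fun k => u (bvert π k)) :=
    isBoundedUnder_of ⟨-Cu, fun k => (abs_le.1 (hCu _)).1⟩
  have hvb1 : IsBoundedUnder (· ≤ ·) atTop (fun k => v (bvert π k)) :=
    isBoundedUnder_of ⟨Cv, fun k => (abs_le.1 (hCv _)).2⟩
  have hvb2 : IsBoundedUnder (· ≥ ·) atTop (fun k => v (bvert π k)) :=
    isBoundedUnder_of ⟨-Cv, fun k => (abs_le.1 (hCv _)).1⟩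
  have hub2' : IsBoundedUnder (· ≥ ·) atTop (fun k => u (bvert π k) + w x0) :=
    isBoundedUnder_of ⟨-Cu + w x0, fun k => add_le_add_left (abs_le.1 (hCu _)).1 _⟩
  have h1 : liminf (fun k => u (bvert π k) + w x0) atTop ≤
      liminf (fun k => v (bvert π k)) atTop :=
    liminf_le_liminf hev hub2' hvb1.isCobounded_ge
  have h2 : liminf (fun k => u (bvert π k) + w x0) atTop =
      liminf (fun k => u (bvert π k)) atTop + w x0 :=
    liminf_add_const atTop _ _ hub1.isCobounded_ge hub2
  have h3 : liminf (fun k => v (bvert π k)) atTop ≤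
      limsup (fun k => v (bvert π k)) atTop :=
    liminf_le_limsup hvb1 hvb2
  have h4 := hbd π
  rw [h2] at h1
  linarith
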